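/- arXiv:2208.06524 — 8 statements merged into one kernel-verified Lean document; each statement's English description precedes it below -/
import Mathlib

section
/- Let g be a convex differentiable function on ℝⁿ whose gradient is L-Lipschitz. Then for all x, y: ‖∇g(y) − ∇g(x)‖² ≤ 2L·(g(y) − g(x) − ⟨∇g(x), y − x⟩). -/
/-!
Convexity bounds `g` from below by its tangent at `x`, and the Lipschitz gradient bounds it from
above by the paraboloid `g y + ⟪G y, z - y⟫ + L / 2 * ‖z - y‖ ^ 2`. Comparing the two at
`z = y - w` bounds `g y - g x - ⟪G x, y - x⟫` below by `⟪G y - G x, w⟫ - L / 2 * ‖w‖ ^ 2` for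
every `w`, and the optimal choice `w = L⁻¹ • (G y - G x)` gives `‖G y - G x‖ ^ 2 / (2 * L)`.
When `L ≤ 0` the gradient is constant, and the two bounds force `g` to be affine.
-/

open RealInnerProductSpace

variable {E : Type*} [NormedAddCommGroup E] [InnerProductSpace ℝ E]

theorem sq_norm_le_of_forall_inner_sub_le {v : E} {L D : ℝ} (hL : 0 < L)
    (h : ∀ w, ⟪v, w⟫ - L / 2 * ‖w‖ ^ 2 ≤ D) : ‖v‖ ^ 2 ≤ 2 * L * D := by
  have := h (L⁻¹ • v)
  rw [real_inner_smul_right, real_inner_self_eq_norm_sq, norm_smul, Real.norm_eq_abs,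
    abs_of_pos (inv_pos.2 hL)] at this
  field_simp at this
  linarith

variable [CompleteSpace E] {g : E → ℝ} {G : E → E} {g' x y d : E} {L : ℝ}

theorem HasGradientAt.hasDerivAt_comp_add_smul {t : ℝ} (hg : HasGradientAt g g' (x + t • d)) :
    HasDerivAt (fun s : ℝ => g (x + s • d)) ⟪g', d⟫ t := by
  have hline : HasDerivAt (fun s : ℝ => x + s • d) d t := by
    simpa using ((hasDerivAt_id t).smul_const d).const_add x
  have h := hg.hasFDerivAt.comp_hasDerivAt t hline
  simp only [InnerProductSpace.toDual_apply_apply] at h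
  exact h

theorem ConvexOn.add_inner_le_of_hasGradientAt {s : Set E} (hconv : ConvexOn ℝ s g)
    (hx : x ∈ s) (hy : y ∈ s) (hg : HasGradientAt g g' x) :
    g x + ⟪g', y - x⟫ ≤ g y := by
  have hline : ConvexOn ℝ (AffineMap.lineMap x y ⁻¹' s) (fun t : ℝ => g (x + t • (y - x))) := by
    have heq : g ∘ AffineMap.lineMap x y = fun t : ℝ => g (x + t • (y - x)) := by
      ext t
      simp [AffineMap.lineMap_apply_module', add_comm]
    simpa [heq] using hconv.comp_affineMap (AffineMap.lineMap x y)
  have hderiv : HasDerivAt (fun t : ℝ => g (x + t • (y - x))) ⟪g', y - x⟫ 0 :=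
    HasGradientAt.hasDerivAt_comp_add_smul (by simpa using hg)
  have := hline.le_slope_of_hasDerivAt (by simpa using hx) (by simpa using hy) one_pos hderiv
  simp only [slope_def_field, one_smul, add_sub_cancel, zero_smul, add_zero, sub_zero, div_one]
    at this
  linarith

theorem le_add_inner_add_of_hasGradientAt_of_lipschitz (hg : ∀ z, HasGradientAt g (G z) z)
    (hlip : ∀ z, ‖G z - G x‖ ≤ L * ‖z - x‖) (y : E) :
    g y ≤ g x + ⟪G x, y - x⟫ + L / 2 * ‖y - x‖ ^ 2 := by
  set d := y - x
  have hinner (t : ℝ) (ht : 0 ≤ t) : ⟪G (x + t • d), d⟫ ≤ ⟪G x, d⟫ + L * t * ‖d‖ ^ 2 := by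
    have hcs := real_inner_le_norm (G (x + t • d) - G x) d
    have hG : ‖G (x + t • d) - G x‖ ≤ L * (t * ‖d‖) := by
      simpa [norm_smul, abs_of_nonneg ht] using hlip (x + t • d)
    rw [inner_sub_left] at hcs
    nlinarith [norm_nonneg d]
  have hline (t : ℝ) : HasDerivAt (fun t : ℝ => g (x + t • d)) ⟪G (x + t • d), d⟫ t :=
    (hg _).hasDerivAt_comp_add_smul
  have hbound (t : ℝ) : HasDerivAt (fun t : ℝ => g x + t * ⟪G x, d⟫ + L / 2 * t ^ 2 * ‖d‖ ^ 2)
      (⟪G x, d⟫ + L * t * ‖d‖ ^ 2) t := by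
    refine ((((hasDerivAt_id t).mul_const ⟪G x, d⟫).const_add (g x)).add
      (((hasDerivAt_pow 2 t).const_mul (L / 2)).mul_const (‖d‖ ^ 2))).congr_deriv ?_
    simp only [one_mul, Nat.cast_ofNat]
    ring
  have := image_le_of_deriv_right_le_deriv_boundary
    (fun t _ => (hline t).continuousAt.continuousWithinAt)
    (fun t _ => (hline t).hasDerivWithinAt) (by simp)
    (fun t _ => (hbound t).continuousAt.continuousWithinAt) (fun t _ => (hbound t).hasDerivWithinAt)
    (fun t ht => hinner t ht.1) (Set.right_mem_Icc.2 zero_le_one)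
  simpa [d] using this

theorem inner_sub_le_of_convexOn_of_lipschitz (hconv : ConvexOn ℝ Set.univ g)
    (hg : ∀ z, HasGradientAt g (G z) z) (hlip : ∀ z, ‖G z - G y‖ ≤ L * ‖z - y‖) (x w : E) :
    ⟪G y - G x, w⟫ - L / 2 * ‖w‖ ^ 2 ≤ g y - g x - ⟪G x, y - x⟫ := by
  have hbelow :=
    hconv.add_inner_le_of_hasGradientAt (Set.mem_univ x) (Set.mem_univ (y - w)) (hg x)
  have habove := le_add_inner_add_of_hasGradientAt_of_lipschitz hg hlip (y - w)
  rw [show y - w - y = -w by abel, inner_neg_right, norm_neg] at habove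
  rw [show y - w - x = (y - x) - w by abel, inner_sub_right] at hbelow
  rw [inner_sub_left]
  linarith

/-- For a convex differentiable `g : ℝⁿ → ℝ` with `L`-Lipschitz gradient `G`, for all `x, y`:
`‖G y − G x‖² ≤ 2L (g y − g x − ⟨G x, y − x⟩)`. -/
theorem stmt_2 {n : ℕ} (g : EuclideanSpace ℝ (Fin n) → ℝ)
    (G : EuclideanSpace ℝ (Fin n) → EuclideanSpace ℝ (Fin n)) (L : ℝ)
    (hconv : ConvexOn ℝ Set.univ g)
    (hgrad : ∀ x, HasGradientAt g (G x) x)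
    (hlip : ∀ x y, ‖G x - G y‖ ≤ L * ‖x - y‖) :
    ∀ x y, ‖G y - G x‖ ^ 2 ≤ 2 * L * (g y - g x - ⟪G x, y - x⟫) := by
  intro x y
  rcases le_or_gt L 0 with hL | hL
  · have hGxy : G y = G x := by
      rw [← sub_eq_zero, ← norm_le_zero_iff]
      exact (hlip y x).trans (mul_nonpos_of_nonpos_of_nonneg hL (norm_nonneg _))
    have hflat : g y - g x - ⟪G x, y - x⟫ = 0 := by
      have hdescent := le_add_inner_add_of_hasGradientAt_of_lipschitz hgrad (hlip · x) y
      have hconvex :=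
        hconv.add_inner_le_of_hasGradientAt (Set.mem_univ x) (Set.mem_univ y) (hgrad x)
      linarith [mul_nonpos_of_nonpos_of_nonneg hL (sq_nonneg ‖y - x‖)]
    simp [hGxy, hflat]
  · exact sq_norm_le_of_forall_inner_sub_le hL
      (inner_sub_le_of_convexOn_of_lipschitz hconv hgrad (hlip · y) x)
end

section
/- Let h: ℝⁿ → ℝ be μ-strongly convex, let Γ ⊆ ℝⁿ be closed convex, let v ∈ ℝⁿ, x_k ∈ ℝⁿ, η > 0, and let x_{k+1} = argmin over x ∈ Γ of h(x) + ⟨v, x⟩ + (1/(2η))‖x_k − x‖². Then for all u ∈ Γ: ⟨v, x_{k+1} − u⟩ ≤ −(1/(2η))‖x_{k+1} − x_k‖² + (1/(2η))‖x_k − u‖² − ((1+ημ)/(2η))‖x_{k+1} − u‖² + h(u) − h(x_{k+1}). -/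
open RealInnerProductSpace

private lemma comb_aux {n : ℕ} (a b : EuclideanSpace ℝ (Fin n)) (t : ℝ) :
    ‖(1 - t) • a + t • b‖ ^ 2
      = (1 - t) * ‖a‖ ^ 2 + t * ‖b‖ ^ 2 - t * (1 - t) * ‖a - b‖ ^ 2 := by
  rw [norm_add_sq_real, norm_sub_sq_real, norm_smul, norm_smul,
    real_inner_smul_left, real_inner_smul_right, mul_pow, mul_pow]
  simp only [Real.norm_eq_abs, sq_abs]
  ring

set_option maxHeartbeats 1000000 in
/-- Mirror-descent/proximal step inequality: if `h` is `μ`-strongly convex, `Γ` is nonempty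
closed convex, and `x₁` minimizes `x ↦ h x + ⟨v, x⟩ + (1/(2η))‖x₀ − x‖²` over `Γ`, then for
all `u ∈ Γ`:
`⟨v, x₁ − u⟩ ≤ −(1/(2η))‖x₁ − x₀‖² + (1/(2η))‖x₀ − u‖² − ((1+ημ)/(2η))‖x₁ − u‖² + h u − h x₁`. -/
theorem stmt_4 {n : ℕ} (h : EuclideanSpace ℝ (Fin n) → ℝ) (μ η : ℝ)
    (Γ : Set (EuclideanSpace ℝ (Fin n)))
    (hμ : 0 ≤ μ) (hη : 0 < η)
    (hsc : ConvexOn ℝ Set.univ (fun x => h x - μ / 2 * ‖x‖ ^ 2))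
    (hΓc : IsClosed Γ) (hΓconv : Convex ℝ Γ) (hΓne : Γ.Nonempty)
    (v x₀ x₁ : EuclideanSpace ℝ (Fin n))
    (hx₁Γ : x₁ ∈ Γ)
    (hmin : IsMinOn (fun x => h x + ⟪v, x⟫ + 1 / (2 * η) * ‖x₀ - x‖ ^ 2) Γ x₁) :
    ∀ u ∈ Γ, ⟪v, x₁ - u⟫ ≤
      -(1 / (2 * η)) * ‖x₁ - x₀‖ ^ 2 + 1 / (2 * η) * ‖x₀ - u‖ ^ 2
        - (1 + η * μ) / (2 * η) * ‖x₁ - u‖ ^ 2 + h u - h x₁ := by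
  intro u hu
  have hη' : (η:ℝ) ≠ 0 := ne_of_gt hη
  set c : ℝ := ‖x₁ - u‖ ^ 2 with hc
  have hc0 : 0 ≤ c := by rw [hc]; positivity
  set A : ℝ := h x₁ + ⟪v, x₁⟫ + 1 / (2 * η) * ‖x₀ - x₁‖ ^ 2 with hA
  set B : ℝ := h u + ⟪v, u⟫ + 1 / (2 * η) * ‖x₀ - u‖ ^ 2 with hB
  have step : ∀ t ∈ Set.Ioc (0 : ℝ) 1, A ≤ B - (μ + 1 / η) / 2 * (1 - t) * c := by
    intro t ht
    obtain ⟨ht0, ht1⟩ := ht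
    set z : EuclideanSpace ℝ (Fin n) := (1 - t) • x₁ + t • u with hzdef
    have hz : z ∈ Γ := hΓconv hx₁Γ hu (by linarith) ht0.le (by ring)
    have hmin' : A ≤ h z + ⟪v, z⟫ + 1 / (2 * η) * ‖x₀ - z‖ ^ 2 :=
      isMinOn_iff.mp hmin z hz
    have hg := hsc.2 (Set.mem_univ x₁) (Set.mem_univ u)
      (by linarith : (0:ℝ) ≤ 1 - t) ht0.le (by ring)
    simp only [smul_eq_mul] at hg
    rw [← hzdef] at hg
    have e1 : ‖z‖ ^ 2 = (1 - t) * ‖x₁‖ ^ 2 + t * ‖u‖ ^ 2 - t * (1 - t) * c :=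
      comb_aux x₁ u t
    have e2 : ‖x₀ - z‖ ^ 2
        = (1 - t) * ‖x₀ - x₁‖ ^ 2 + t * ‖x₀ - u‖ ^ 2 - t * (1 - t) * c := by
      have hrw : x₀ - z = (1 - t) • (x₀ - x₁) + t • (x₀ - u) := by
        rw [hzdef]; module
      have hd : (x₀ - x₁) - (x₀ - u) = -(x₁ - u) := by abel
      rw [hrw, comb_aux, hd, norm_neg]
    have e3 : ⟪v, z⟫ = (1 - t) * ⟪v, x₁⟫ + t * ⟪v, u⟫ := by
      rw [hzdef, inner_add_right, real_inner_smul_right, real_inner_smul_right]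
    have h1' : h z ≤ (1 - t) * h x₁ + t * h u - μ / 2 * (t * (1 - t)) * c := by
      calc h z = (h z - μ / 2 * ‖z‖ ^ 2) + μ / 2 * ‖z‖ ^ 2 := by ring
        _ ≤ ((1 - t) * (h x₁ - μ / 2 * ‖x₁‖ ^ 2) + t * (h u - μ / 2 * ‖u‖ ^ 2))
            + μ / 2 * ‖z‖ ^ 2 := by linarith [hg]
        _ = (1 - t) * h x₁ + t * h u - μ / 2 * (t * (1 - t)) * c := by rw [e1]; ring
    have hFz : h z + ⟪v, z⟫ + 1 / (2 * η) * ‖x₀ - z‖ ^ 2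
        ≤ (1 - t) * A + t * B - (μ + 1 / η) / 2 * (t * (1 - t)) * c := by
      calc h z + ⟪v, z⟫ + 1 / (2 * η) * ‖x₀ - z‖ ^ 2
          ≤ ((1 - t) * h x₁ + t * h u - μ / 2 * (t * (1 - t)) * c)
            + ((1 - t) * ⟪v, x₁⟫ + t * ⟪v, u⟫)
            + 1 / (2 * η) * ((1 - t) * ‖x₀ - x₁‖ ^ 2 + t * ‖x₀ - u‖ ^ 2
              - t * (1 - t) * c) := by rw [e3, e2]; linarith [h1']
        _ = (1 - t) * A + t * B - (μ + 1 / η) / 2 * (t * (1 - t)) * c := by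
            rw [hA, hB]; field_simp; ring
    have hcomb : A ≤ (1 - t) * A + t * B - (μ + 1 / η) / 2 * (t * (1 - t)) * c :=
      le_trans hmin' hFz
    have h2 : t * A ≤ t * (B - (μ + 1 / η) / 2 * (1 - t) * c) := by
      have expand : t * (B - (μ + 1 / η) / 2 * (1 - t) * c)
          = t * B - (μ + 1 / η) / 2 * (t * (1 - t)) * c := by ring
      have expand2 : (1 - t) * A = A - t * A := by ring
      linarith [hcomb, expand, expand2]
    exact le_of_mul_le_mul_left h2 ht0
  have lim : Filter.Tendsto (fun t : ℝ => B - (μ + 1 / η) / 2 * (1 - t) * c)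
      (nhdsWithin 0 (Set.Ioi 0)) (nhds (B - (μ + 1 / η) / 2 * c)) := by
    have hcont : Continuous fun t : ℝ => B - (μ + 1 / η) / 2 * (1 - t) * c := by
      fun_prop
    have h0 := (hcont.tendsto 0).mono_left
      (nhdsWithin_le_nhds : nhdsWithin (0:ℝ) (Set.Ioi 0) ≤ nhds 0)
    simpa using h0
  have key : A + (μ + 1 / η) / 2 * c ≤ B := by
    have hb : A ≤ B - (μ + 1 / η) / 2 * c := by
      refine ge_of_tendsto lim ?_
      filter_upwards [Ioc_mem_nhdsGT_of_mem
        (by constructor <;> norm_num : (0:ℝ) ∈ Set.Ico (0:ℝ) 1)] with t ht using step t ht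
    linarith
  have hvsub : ⟪v, x₁ - u⟫ = ⟪v, x₁⟫ - ⟪v, u⟫ := inner_sub_right v x₁ u
  have hnrm : ‖x₀ - x₁‖ = ‖x₁ - x₀‖ := norm_sub_rev _ _
  have hcoef2 : (μ + 1 / η) / 2 * c = (1 + η * μ) / (2 * η) * c := by
    field_simp; ring
  rw [hA, hB, hnrm] at key
  rw [hvsub]
  linarith [key, hcoef2]
end

section
/- If g: ℝⁿ → ℝ is convex, differentiable, and its gradient is L-Lipschitz, then its convex conjugate g* is (1/L)-strongly convex on its domain. -/
open RealInnerProductSpace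

/-- The Fenchel conjugate of a real-valued function on `ℝⁿ`, with values in `EReal`. -/
noncomputable def fenchelConj' {n : ℕ} (g : EuclideanSpace ℝ (Fin n) → ℝ)
    (p : EuclideanSpace ℝ (Fin n)) : EReal :=
  ⨆ x : EuclideanSpace ℝ (Fin n), ((⟪p, x⟫ - g x : ℝ) : EReal)

/-!
Proof idea: the gradient being `L`-Lipschitz gives the descent lemma
`g (x + u) ≤ g x + ⟪∇g x, u⟫ + L/2 ‖u‖²`. For `d = p - q`, testing the suprema defining
`g* p` and `g* q` at the points `x + ((1 - l)/L) d` and `x - (l/L) d` and averaging with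
weights `l`, `1 - l` shows `⟪l p + (1 - l) q, x⟫ - g x + l(1 - l)/(2L) ‖d‖² ≤ l g* p + (1 - l) g* q`
for every `x`; taking the supremum over `x` gives the claim.
-/

section DescentLemma

variable {E : Type*} [NormedAddCommGroup E] [InnerProductSpace ℝ E] {g : E → ℝ} {G : E → E}

theorem hasDerivAt_apply_add_smul [CompleteSpace E] (hgrad : ∀ x, HasGradientAt g (G x) x)
    (x u : E) (t : ℝ) :
    HasDerivAt (fun t : ℝ => g (x + t • u)) ⟪G (x + t • u), u⟫ t := by
  have hline : HasDerivAt (fun t : ℝ => x + t • u) u t := by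
    simpa using ((hasDerivAt_id t).smul_const u).const_add x
  have := (hgrad (x + t • u)).hasFDerivAt.comp_hasDerivAt t hline
  simp only [InnerProductSpace.toDual_apply_apply] at this
  exact this

theorem inner_sub_le_of_lipschitz {L : ℝ} (hlip : ∀ x y, ‖G x - G y‖ ≤ L * ‖x - y‖)
    (x u : E) {t : ℝ} (ht : 0 ≤ t) :
    ⟪G (x + t • u), u⟫ - ⟪G x, u⟫ ≤ t * L * ‖u‖ ^ 2 := by
  have hG : ‖G (x + t • u) - G x‖ ≤ L * (t * ‖u‖) := by
    simpa [norm_smul, abs_of_nonneg ht] using hlip (x + t • u) x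
  calc ⟪G (x + t • u), u⟫ - ⟪G x, u⟫ = ⟪G (x + t • u) - G x, u⟫ := (inner_sub_left ..).symm
    _ ≤ ‖G (x + t • u) - G x‖ * ‖u‖ := real_inner_le_norm _ _
    _ ≤ L * (t * ‖u‖) * ‖u‖ := by gcongr
    _ = t * L * ‖u‖ ^ 2 := by ring

theorem apply_add_le_of_lipschitz_gradient [CompleteSpace E] {L : ℝ}
    (hgrad : ∀ x, HasGradientAt g (G x) x) (hlip : ∀ x y, ‖G x - G y‖ ≤ L * ‖x - y‖) (x u : E) :
    g (x + u) ≤ g x + ⟪G x, u⟫ + L / 2 * ‖u‖ ^ 2 := by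
  set h : ℝ → ℝ := fun t => g (x + t • u) - t * ⟪G x, u⟫ - t ^ 2 * (L / 2) * ‖u‖ ^ 2
  have hderiv : ∀ t, HasDerivAt h (⟪G (x + t • u), u⟫ - ⟪G x, u⟫ - t * L * ‖u‖ ^ 2) t := by
    intro t
    refine (((hasDerivAt_apply_add_smul hgrad x u t).sub
      ((hasDerivAt_id t).mul_const ⟪G x, u⟫)).sub
      (((hasDerivAt_pow 2 t).mul_const (L / 2)).mul_const (‖u‖ ^ 2))).congr_deriv ?_
    simp only [one_mul, Nat.cast_ofNat]
    ring
  have hanti : AntitoneOn h (Set.Icc 0 1) := by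
    refine antitoneOn_of_hasDerivWithinAt_nonpos (convex_Icc 0 1)
      (fun t _ => (hderiv t).continuousAt.continuousWithinAt)
      (fun t _ => (hderiv t).hasDerivWithinAt) fun t ht => ?_
    rw [interior_Icc] at ht
    linarith [inner_sub_le_of_lipschitz hlip x u ht.1.le]
  have h01 := hanti (Set.left_mem_Icc.2 zero_le_one) (Set.right_mem_Icc.2 zero_le_one) zero_le_one
  norm_num [h] at h01
  linarith

theorem inner_sub_add_le_of_descent {L : ℝ} (hL : L ≠ 0)
    (hdesc : ∀ x u, g (x + u) ≤ g x + ⟪G x, u⟫ + L / 2 * ‖u‖ ^ 2)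
    {p q : E} {A B : ℝ} (hA : ∀ y, ⟪p, y⟫ - g y ≤ A) (hB : ∀ y, ⟪q, y⟫ - g y ≤ B)
    {l : ℝ} (hl0 : 0 ≤ l) (hl1 : l ≤ 1) (x : E) :
    ⟪l • p + (1 - l) • q, x⟫ - g x + 1 / (2 * L) * (l * (1 - l)) * ‖p - q‖ ^ 2
      ≤ l * A + (1 - l) * B := by
  set d := p - q
  have hp := (hdesc x (((1 - l) / L) • d)).trans' (sub_le_comm.1 (hA (x + ((1 - l) / L) • d)))
  have hq := (hdesc x ((-(l / L)) • d)).trans' (sub_le_comm.1 (hB (x + (-(l / L)) • d)))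
  simp only [inner_add_right, real_inner_smul_right, norm_smul, mul_pow, Real.norm_eq_abs,
    sq_abs, neg_mul] at hp hq
  have hd : ⟪p, d⟫ - ⟪q, d⟫ = ‖d‖ ^ 2 := by
    rw [← inner_sub_left, real_inner_self_eq_norm_sq]
  rw [inner_add_left, real_inner_smul_left, real_inner_smul_left]
  linear_combination (norm := skip) l * hp + (1 - l) * hq - (l * (1 - l) / L) * hd
  exact le_of_eq (by field_simp; ring)

end DescentLemma

section FenchelConjugate

variable {n : ℕ} {g : EuclideanSpace ℝ (Fin n) → ℝ}

theorem fenchelConj'_le_coe_iff {p : EuclideanSpace ℝ (Fin n)} {a : ℝ} :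
    fenchelConj' g p ≤ a ↔ ∀ x, ⟪p, x⟫ - g x ≤ a := by
  simp only [fenchelConj', iSup_le_iff, EReal.coe_le_coe_iff]

theorem fenchelConj'_ne_bot (p : EuclideanSpace ℝ (Fin n)) : fenchelConj' g p ≠ ⊥ :=
  ne_bot_of_le_ne_bot (EReal.coe_ne_bot _)
    (le_iSup (fun x => ((⟪p, x⟫ - g x : ℝ) : EReal)) 0)

theorem exists_fenchelConj'_eq_coe {p : EuclideanSpace ℝ (Fin n)} (hp : fenchelConj' g p ≠ ⊤) :
    ∃ A : ℝ, fenchelConj' g p = A :=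
  ⟨_, (EReal.coe_toReal hp (fenchelConj'_ne_bot p)).symm⟩

end FenchelConjugate

theorem stmt_7_general {n : ℕ} (g : EuclideanSpace ℝ (Fin n) → ℝ)
    (G : EuclideanSpace ℝ (Fin n) → EuclideanSpace ℝ (Fin n)) (L : ℝ) (hL : 0 < L)
    (hgrad : ∀ x, HasGradientAt g (G x) x)
    (hlip : ∀ x y, ‖G x - G y‖ ≤ L * ‖x - y‖) :
    ∀ p q : EuclideanSpace ℝ (Fin n), fenchelConj' g p ≠ ⊤ → fenchelConj' g q ≠ ⊤ →
      ∀ l : ℝ, 0 ≤ l → l ≤ 1 →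
        fenchelConj' g (l • p + (1 - l) • q)
            + ((1 / (2 * L) * (l * (1 - l)) * ‖p - q‖ ^ 2 : ℝ) : EReal)
          ≤ ((l : ℝ) : EReal) * fenchelConj' g p
            + (((1 - l : ℝ)) : EReal) * fenchelConj' g q := by
  intro p q hp hq l hl0 hl1
  obtain ⟨A, hA⟩ := exists_fenchelConj'_eq_coe hp
  obtain ⟨B, hB⟩ := exists_fenchelConj'_eq_coe hq
  set c := 1 / (2 * L) * (l * (1 - l)) * ‖p - q‖ ^ 2
  have hbound : fenchelConj' g (l • p + (1 - l) • q) ≤ ((l * A + (1 - l) * B - c : ℝ) : EReal) :=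
    fenchelConj'_le_coe_iff.2 fun x => le_sub_iff_add_le.2 <|
      inner_sub_add_le_of_descent hL.ne' (apply_add_le_of_lipschitz_gradient hgrad hlip)
        (fenchelConj'_le_coe_iff.1 hA.le) (fenchelConj'_le_coe_iff.1 hB.le) hl0 hl1 x
  calc fenchelConj' g (l • p + (1 - l) • q) + c
      ≤ ((l * A + (1 - l) * B - c : ℝ) : EReal) + c := add_le_add_left hbound _
    _ = l * fenchelConj' g p + (1 - l : ℝ) * fenchelConj' g q := by
      rw [hA, hB, ← EReal.coe_add, sub_add_cancel, EReal.coe_add, EReal.coe_mul, EReal.coe_mul]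

/-- If `g : ℝⁿ → ℝ` is convex, differentiable with `L`-Lipschitz gradient `G`, then its
conjugate `g*` is `(1/L)`-strongly convex on its domain `{p | g*(p) ≠ ⊤}`. -/
theorem stmt_7 {n : ℕ} (g : EuclideanSpace ℝ (Fin n) → ℝ)
    (G : EuclideanSpace ℝ (Fin n) → EuclideanSpace ℝ (Fin n)) (L : ℝ) (hL : 0 < L)
    (hconv : ConvexOn ℝ Set.univ g)
    (hgrad : ∀ x, HasGradientAt g (G x) x)
    (hlip : ∀ x y, ‖G x - G y‖ ≤ L * ‖x - y‖) :
    ∀ p q : EuclideanSpace ℝ (Fin n), fenchelConj' g p ≠ ⊤ → fenchelConj' g q ≠ ⊤ →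
      ∀ l : ℝ, 0 ≤ l → l ≤ 1 →
        fenchelConj' g (l • p + (1 - l) • q)
            + ((1 / (2 * L) * (l * (1 - l)) * ‖p - q‖ ^ 2 : ℝ) : EReal)
          ≤ ((l : ℝ) : EReal) * fenchelConj' g p
            + (((1 - l : ℝ)) : EReal) * fenchelConj' g q :=
  stmt_7_general g G L hL hgrad hlip
end

section
/- Let μ > 0, L > μ, and define g(x) = ((L−μ)/8)(⟨x, Ax⟩ − 2x₁) + (μ/2)‖x‖² on ℓ², where A is the tridiagonal operator with 2 on the diagonal and −1 off-diagonal. Then g is μ-strongly convex and L-smooth, and the point x⋆ with x⋆ⱼ = qʲ where q = (√κ − 1)/(√κ + 1), κ = L/μ, is a minimizer of g. -/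
/-!
Write `g x = c (⟪x, A x⟫ - 2 x₀) + (μ/2)‖x‖²` with `c = (L - μ)/8`. Since `A = 2 - S - S*` for the
left shift `S`, a contraction, `A` is a positive operator of norm at most `4`. For such a quadratic
the second-order expansion `g (x + h) = g x + ⟪∇g x, h⟫ + c ⟪h, A h⟫ + (μ/2)‖h‖²` is exact and its
remainder is nonnegative; this gives convexity of `g - (μ/2)‖·‖²`, the gradient
`∇g x = 2c (A x - e₀) + μ x` with Lipschitz constant `8c + μ = L`, and global minimality at every
critical point. The point `x⋆ⱼ = q^(j+1)` is critical because `q` is a root of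
`2c (1 - q)² = μ q`, the characteristic equation of the recurrence `∇g x = 0`.
-/

open RealInnerProductSpace Set Asymptotics
open scoped lp

noncomputable section Quadratic

variable {F : Type*} [NormedAddCommGroup F] [InnerProductSpace ℝ F]

def quadObjective (T : F →L[ℝ] F) (b : F) (c μ : ℝ) (x : F) : ℝ :=
  c * (⟪x, T x⟫ - 2 * ⟪b, x⟫) + μ / 2 * ‖x‖ ^ 2

def quadGradient (T : F →L[ℝ] F) (b : F) (c μ : ℝ) (x : F) : F :=
  (2 * c) • (T x - b) + μ • x

variable {T : F →L[ℝ] F} {b : F} {c μ : ℝ}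

lemma inner_add_map_add (hT : T.IsSymmetric) (x h : F) :
    ⟪x + h, T (x + h)⟫ = ⟪x, T x⟫ + 2 * ⟪T x, h⟫ + ⟪h, T h⟫ := by
  have hsymm : ⟪x, T h⟫ = ⟪T x, h⟫ := (hT x h).symm
  rw [map_add, inner_add_left, inner_add_right, inner_add_right, hsymm, real_inner_comm h]
  ring

lemma quadObjective_add (hT : T.IsSymmetric) (x h : F) :
    quadObjective T b c μ (x + h) =
      quadObjective T b c μ x + ⟪quadGradient T b c μ x, h⟫ + quadObjective T 0 c μ h := by
  simp only [quadObjective, quadGradient, inner_add_map_add hT, inner_add_left, inner_add_right,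
    inner_sub_left, inner_zero_left, real_inner_smul_left, norm_add_sq_real]
  ring

lemma quadObjective_zero_smul (a : ℝ) (h : F) :
    quadObjective T 0 c μ (a • h) = a ^ 2 * quadObjective T 0 c μ h := by
  simp only [quadObjective, inner_zero_left, map_smul, real_inner_smul_left,
    real_inner_smul_right, norm_smul, Real.norm_eq_abs, mul_pow, sq_abs]
  ring

lemma abs_quadObjective_zero_le (h : F) :
    |quadObjective T 0 c μ h| ≤ (|c| * ‖T‖ + |μ| / 2) * ‖h‖ ^ 2 := by
  have hquad : |⟪h, T h⟫| ≤ ‖T‖ * ‖h‖ ^ 2 :=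
    calc |⟪h, T h⟫| ≤ ‖h‖ * ‖T h‖ := abs_real_inner_le_norm _ _
      _ ≤ ‖h‖ * (‖T‖ * ‖h‖) := by grw [T.le_opNorm]
      _ = ‖T‖ * ‖h‖ ^ 2 := by ring
  calc |quadObjective T 0 c μ h| ≤ |c| * (‖T‖ * ‖h‖ ^ 2) + |μ| / 2 * ‖h‖ ^ 2 := by
        simp only [quadObjective, inner_zero_left, mul_zero, sub_zero]
        grw [abs_add_le, abs_mul, abs_mul, abs_div, abs_two, abs_of_nonneg (sq_nonneg ‖h‖),
          hquad]
    _ = (|c| * ‖T‖ + |μ| / 2) * ‖h‖ ^ 2 := by ring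

lemma quadObjective_zero_nonneg (hT : T.IsPositive) (hc : 0 ≤ c) (hμ : 0 ≤ μ) (h : F) :
    0 ≤ quadObjective T 0 c μ h := by
  have := hT.inner_nonneg_right h
  simp only [quadObjective, inner_zero_left, mul_zero, sub_zero]
  positivity

lemma hasGradientAt_quadObjective [CompleteSpace F] (hT : T.IsSymmetric) (x : F) :
    HasGradientAt (quadObjective T b c μ) (quadGradient T b c μ x) x := by
  rw [hasGradientAt_iff_isLittleO_nhds_zero]
  have hremainder : quadObjective T 0 c μ =O[nhds 0] fun h => ‖h‖ ^ 2 :=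
    .of_bound _ (.of_forall fun h => by
      simpa only [Real.norm_eq_abs, abs_pow, abs_norm] using abs_quadObjective_zero_le h)
  have hexpand : (fun h => quadObjective T b c μ (x + h) - quadObjective T b c μ x -
      ⟪quadGradient T b c μ x, h⟫) = quadObjective T 0 c μ := by
    funext h
    rw [quadObjective_add hT]
    ring
  rw [hexpand]
  exact hremainder.trans_isLittleO (isLittleO_norm_pow_id one_lt_two)

lemma norm_quadGradient_sub_le (hc : 0 ≤ c) (hμ : 0 ≤ μ) (x y : F) :
    ‖quadGradient T b c μ x - quadGradient T b c μ y‖ ≤ (2 * c * ‖T‖ + μ) * ‖x - y‖ := by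
  have hdiff : quadGradient T b c μ x - quadGradient T b c μ y =
      (2 * c) • T (x - y) + μ • (x - y) := by
    simp only [quadGradient, map_sub, smul_sub]
    abel
  rw [hdiff]
  calc ‖(2 * c) • T (x - y) + μ • (x - y)‖ ≤ 2 * c * ‖T (x - y)‖ + μ * ‖x - y‖ := by
        grw [norm_add_le, norm_smul, norm_smul, Real.norm_of_nonneg (by positivity),
          Real.norm_of_nonneg hμ]
    _ ≤ 2 * c * (‖T‖ * ‖x - y‖) + μ * ‖x - y‖ := by grw [T.le_opNorm]
    _ = (2 * c * ‖T‖ + μ) * ‖x - y‖ := by ring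

lemma convexOn_quadObjective (hT : T.IsPositive) (hc : 0 ≤ c) (hμ : 0 ≤ μ) :
    ConvexOn ℝ univ (quadObjective T b c μ) := by
  refine ⟨convex_univ, fun x _ y _ s t hs ht hst => ?_⟩
  obtain ⟨h, rfl⟩ : ∃ h, x = y + h := ⟨x - y, by abel⟩
  obtain rfl : t = 1 - s := by linarith
  have hcomb : s • (y + h) + (1 - s) • y = y + s • h := by module
  rw [hcomb, smul_eq_mul, smul_eq_mul, quadObjective_add hT.isSymmetric,
    quadObjective_add hT.isSymmetric, quadObjective_zero_smul, real_inner_smul_right]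
  -- the convexity defect is `s (1 - s)` times the nonnegative quadratic part at `h`
  linear_combination mul_nonneg (mul_nonneg hs ht) (quadObjective_zero_nonneg hT hc hμ h)

lemma isMinOn_quadObjective (hT : T.IsPositive) (hc : 0 ≤ c) (hμ : 0 ≤ μ) {x : F}
    (hx : quadGradient T b c μ x = 0) : IsMinOn (quadObjective T b c μ) univ x := by
  refine isMinOn_univ_iff.2 fun y => ?_
  obtain ⟨h, rfl⟩ : ∃ h, y = x + h := ⟨y - x, by abel⟩
  rw [quadObjective_add hT.isSymmetric, hx, inner_zero_left, add_zero]
  linarith [quadObjective_zero_nonneg hT hc hμ h]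

end Quadratic

namespace lp

def shiftLeft (x : ℓ²(ℕ, ℝ)) : ℓ²(ℕ, ℝ) :=
  ⟨fun j => x (j + 1), memℓp_gen <|
    ((memℓp_gen_iff (by norm_num)).1 x.2).comp_injective (add_left_injective 1)⟩

def shiftRight (x : ℓ²(ℕ, ℝ)) : ℓ²(ℕ, ℝ) :=
  ⟨fun | 0 => 0 | j + 1 => x j, memℓp_gen <|
    (summable_nat_add_iff 1).1 ((memℓp_gen_iff (by norm_num)).1 x.2)⟩

@[simp] lemma shiftLeft_apply (x : ℓ²(ℕ, ℝ)) (j : ℕ) : shiftLeft x j = x (j + 1) := rfl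

@[simp] lemma shiftRight_apply_zero (x : ℓ²(ℕ, ℝ)) : shiftRight x 0 = 0 := rfl

@[simp] lemma shiftRight_apply_succ (x : ℓ²(ℕ, ℝ)) (j : ℕ) : shiftRight x (j + 1) = x j := rfl

lemma shiftLeft_shiftRight (x : ℓ²(ℕ, ℝ)) : shiftLeft (shiftRight x) = x := rfl

lemma inner_shiftLeft_left (x y : ℓ²(ℕ, ℝ)) : ⟪shiftLeft x, y⟫ = ⟪x, shiftRight y⟫ := by
  rw [inner_eq_tsum (𝕜 := ℝ), inner_eq_tsum (𝕜 := ℝ),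
    (summable_inner (𝕜 := ℝ) x (shiftRight y)).tsum_eq_zero_add]
  simp

lemma inner_shiftRight_left (x y : ℓ²(ℕ, ℝ)) : ⟪shiftRight x, y⟫ = ⟪x, shiftLeft y⟫ := by
  rw [real_inner_comm, ← inner_shiftLeft_left, real_inner_comm]

lemma norm_shiftLeft_le (x : ℓ²(ℕ, ℝ)) : ‖shiftLeft x‖ ≤ ‖x‖ := by
  refine norm_le_of_forall_sum_le (by norm_num) (norm_nonneg x) fun s => ?_
  have := sum_rpow_le_norm_rpow (by norm_num) x (s.map (addRightEmbedding 1))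
  simpa [Finset.sum_map] using this

lemma norm_shiftRight (x : ℓ²(ℕ, ℝ)) : ‖shiftRight x‖ = ‖x‖ := by
  have hsq : ‖shiftRight x‖ ^ 2 = ‖x‖ ^ 2 := by
    rw [← real_inner_self_eq_norm_sq, ← real_inner_self_eq_norm_sq, ← inner_shiftLeft_left,
      shiftLeft_shiftRight]
  exact (sq_eq_sq₀ (norm_nonneg _) (norm_nonneg _)).1 hsq

end lp

section Tridiagonal

open lp

lemma apply_eq_two_smul_sub_shiftLeft_sub_shiftRight {A : ℓ²(ℕ, ℝ) →L[ℝ] ℓ²(ℕ, ℝ)}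
    (hA0 : ∀ x, A x 0 = 2 * x 0 - x 1)
    (hA : ∀ x, ∀ j : ℕ, 1 ≤ j → A x j = -x (j - 1) + 2 * x j - x (j + 1)) (x : ℓ²(ℕ, ℝ)) :
    A x = (2 : ℝ) • x - shiftLeft x - shiftRight x := by
  ext j
  change A x j = 2 * x j - x (j + 1) - shiftRight x j
  rcases j with _ | j
  · simp [hA0]
  · simp [hA x (j + 1) (by omega)]
    ring

variable {T : ℓ²(ℕ, ℝ) →L[ℝ] ℓ²(ℕ, ℝ)}
  (hT : ∀ x, T x = (2 : ℝ) • x - shiftLeft x - shiftRight x)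
include hT

lemma isPositive_of_apply_eq_two_smul_sub_shift : T.IsPositive := by
  rw [ContinuousLinearMap.isPositive_iff]
  refine ⟨fun x y => ?_, fun x => ?_⟩
  · simp only [ContinuousLinearMap.coe_coe, hT, inner_sub_left, inner_sub_right,
      real_inner_smul_left, real_inner_smul_right, inner_shiftLeft_left, inner_shiftRight_left]
    ring
  · have hcs : ⟪x, shiftLeft x⟫ ≤ ‖x‖ ^ 2 :=
      calc ⟪x, shiftLeft x⟫ ≤ ‖x‖ * ‖shiftLeft x‖ := real_inner_le_norm _ _
        _ ≤ ‖x‖ * ‖x‖ := by grw [norm_shiftLeft_le]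
        _ = ‖x‖ ^ 2 := (sq _).symm
    rw [hT, inner_sub_left, inner_sub_left, real_inner_smul_left, real_inner_self_eq_norm_sq,
      inner_shiftRight_left, real_inner_comm x]
    linarith

lemma opNorm_le_four_of_apply_eq_two_smul_sub_shift : ‖T‖ ≤ 4 :=
  T.opNorm_le_bound (by norm_num) fun x =>
    calc ‖T x‖ ≤ ‖(2 : ℝ) • x‖ + ‖shiftLeft x‖ + ‖shiftRight x‖ := by
          rw [hT]; grw [norm_sub_le, norm_sub_le]
      _ ≤ 2 * ‖x‖ + ‖x‖ + ‖x‖ := by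
          grw [norm_smul, Real.norm_two, norm_shiftLeft_le, norm_shiftRight]
      _ = 4 * ‖x‖ := by ring

end Tridiagonal

noncomputable def nesterovRatio (κ : ℝ) : ℝ := (√κ - 1) / (√κ + 1)

lemma sub_div_four_mul_one_sub_nesterovRatio_sq {μ L : ℝ} (hμ : 0 < μ) (hL : 0 ≤ L) :
    (L - μ) / 4 * (1 - nesterovRatio (L / μ)) ^ 2 = μ * nesterovRatio (L / μ) := by
  have hsq : μ * √(L / μ) ^ 2 = L := by
    rw [Real.sq_sqrt (by positivity)]; field_simp
  have hpos : 0 < √(L / μ) + 1 := by positivity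
  unfold nesterovRatio
  field_simp
  linear_combination (-4 : ℝ) * hsq

lemma quadGradient_eq_zero_of_geometric {A : ℓ²(ℕ, ℝ) →L[ℝ] ℓ²(ℕ, ℝ)}
    (hA0 : ∀ x, A x 0 = 2 * x 0 - x 1)
    (hA : ∀ x, ∀ j : ℕ, 1 ≤ j → A x j = -x (j - 1) + 2 * x j - x (j + 1))
    {c μ q : ℝ} (hq : 2 * c * (1 - q) ^ 2 = μ * q) {xs : ℓ²(ℕ, ℝ)}
    (hxs : ∀ j, xs j = q ^ (j + 1)) :
    quadGradient A (lp.single 2 0 1) c μ xs = 0 := by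
  ext j
  change 2 * c * (A xs j - (lp.single 2 0 (1 : ℝ) : ℓ²(ℕ, ℝ)) j) + μ * xs j = 0
  rcases j with _ | j
  · simp only [hA0, hxs, lp.single_apply_self]
    linear_combination -hq
  · simp only [hA xs (j + 1) (by omega), hxs, Nat.add_sub_cancel,
      lp.single_apply_ne (E := fun _ : ℕ => ℝ) 2 0 1 j.succ_ne_zero]
    linear_combination (-q ^ (j + 1)) * hq

/-- Nesterov's worst-case function on `ℓ²`: with `0 < μ < L`, `A` the tridiagonal
`(2, −1)` operator, and `g x = ((L−μ)/8)(⟨x, Ax⟩ − 2x₀) + (μ/2)‖x‖²`, the function `g` is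
`μ`-strongly convex and `L`-smooth, and the point `x⋆` with coordinates `x⋆ⱼ = q^(j+1)`
(`q = (√κ−1)/(√κ+1)`, `κ = L/μ`) is a minimizer of `g`. -/
theorem stmt_10 (μ L : ℝ) (hμ : 0 < μ) (hL : μ < L)
    (A : lp (fun _ : ℕ => ℝ) 2 →L[ℝ] lp (fun _ : ℕ => ℝ) 2)
    (hA0 : ∀ x, A x 0 = 2 * x 0 - x 1)
    (hA : ∀ x, ∀ j : ℕ, 1 ≤ j → A x j = -x (j - 1) + 2 * x j - x (j + 1))
    (g : lp (fun _ : ℕ => ℝ) 2 → ℝ)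
    (hg : ∀ x, g x = (L - μ) / 8 * (⟪x, A x⟫ - 2 * x 0) + μ / 2 * ‖x‖ ^ 2) :
    ConvexOn ℝ Set.univ (fun x => g x - μ / 2 * ‖x‖ ^ 2) ∧
    (∃ D : lp (fun _ : ℕ => ℝ) 2 → lp (fun _ : ℕ => ℝ) 2,
      (∀ x, HasGradientAt g (D x) x) ∧ ∀ x y, ‖D x - D y‖ ≤ L * ‖x - y‖) ∧
    (∀ xs : lp (fun _ : ℕ => ℝ) 2,
      (∀ j : ℕ, xs j = ((Real.sqrt (L / μ) - 1) / (Real.sqrt (L / μ) + 1)) ^ (j + 1)) →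
      IsMinOn g Set.univ xs) := by
  have hc : 0 ≤ (L - μ) / 8 := by linarith
  have hshift := apply_eq_two_smul_sub_shiftLeft_sub_shiftRight hA0 hA
  have hApos := isPositive_of_apply_eq_two_smul_sub_shift hshift
  obtain rfl : g = quadObjective A (lp.single 2 0 1) ((L - μ) / 8) μ := funext fun x => by
    rw [hg, quadObjective, lp.inner_single_left]
    simp
  refine ⟨?_, ⟨_, fun x => hasGradientAt_quadObjective hApos.isSymmetric x, fun x y => ?_⟩,
    fun xs hxs => isMinOn_quadObjective hApos hc hμ.le
      (quadGradient_eq_zero_of_geometric (q := nesterovRatio (L / μ)) hA0 hA ?_ hxs)⟩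
  · convert convexOn_quadObjective (b := lp.single 2 0 1) hApos hc le_rfl using 1
    funext x
    simp [quadObjective]
  · calc _ ≤ (2 * ((L - μ) / 8) * ‖A‖ + μ) * ‖x - y‖ := norm_quadGradient_sub_le hc hμ.le x y
      _ ≤ (2 * ((L - μ) / 8) * 4 + μ) * ‖x - y‖ := by
          grw [opNorm_le_four_of_apply_eq_two_smul_sub_shift hshift]
      _ = L * ‖x - y‖ := by ring
  · linear_combination sub_div_four_mul_one_sub_nesterovRatio_sq hμ (hμ.trans hL).le
end

section
/- With g as Nesterov's worst-case function on ℓ² with parameters μ < L and minimizer x⋆ = (q, q², ...), q = (√κ−1)/(√κ+1), κ = L/μ: for any point x^k whose coordinates vanish beyond index k, one has ‖x^k − x⋆‖² ≥ q^{2k}‖x⁰ − x⋆‖² and g(x^k) − g(x⋆) ≥ (μ/2)·q^{2k}‖x⁰ − x⋆‖², where x⁰ = 0. -/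
/-!
The minimizer `x⋆` is a critical point of the quadratic `g`, so
`g x - g x⋆ = (L - μ)/8 ⟪x - x⋆, A (x - x⋆)⟫ + μ/2 ‖x - x⋆‖²`, and `A` is positive since
summation by parts gives `⟪x, A x⟫ = x₀² + ∑ (xⱼ - xⱼ₊₁)²`. Both bounds therefore reduce to the
first one, which holds because `x^k` leaves the tail of `x⋆` untouched:
`‖x^k - x⋆‖² ≥ ∑_{j ≥ k} q^{2(j+1)} = q^{2k} ‖x⋆‖²`.
-/

open RealInnerProductSpace

local notation "ℓ²" => lp (fun _ : ℕ => ℝ) 2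

theorem summable_mul_of_summable_sq {ι : Type*} {f g : ι → ℝ} (hf : Summable fun i => f i ^ 2)
    (hg : Summable fun i => g i ^ 2) : Summable fun i => f i * g i := by
  refine Summable.of_norm_bounded ((hf.add hg).div_const 2) fun i => ?_
  rw [Real.norm_eq_abs, abs_mul]
  nlinarith [sq_nonneg (|f i| - |g i|), sq_abs (f i), sq_abs (g i)]

namespace LpTwoNat

theorem inner_eq_tsum (x y : ℓ²) : ⟪x, y⟫ = ∑' j, x j * y j := by
  rw [lp.inner_eq_tsum]
  simp [mul_comm]

theorem summable_mul (x y : ℓ²) : Summable fun j => x j * y j := by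
  simpa [mul_comm] using lp.summable_inner (𝕜 := ℝ) x y

theorem summable_sq (x : ℓ²) : Summable fun j => x j ^ 2 := by
  simpa [sq] using summable_mul x x

theorem norm_sq_eq_tsum (x : ℓ²) : ‖x‖ ^ 2 = ∑' j, x j ^ 2 := by
  rw [← real_inner_self_eq_norm_sq, inner_eq_tsum]
  simp only [sq]

theorem summable_shift_mul_shift (x y : ℓ²) (m n : ℕ) :
    Summable fun j => x (j + m) * y (j + n) :=
  summable_mul_of_summable_sq ((summable_nat_add_iff m).mpr (summable_sq x))
    ((summable_nat_add_iff n).mpr (summable_sq y))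

theorem tsum_sq_shift_le_norm_sub_sq {x y : ℓ²} {k : ℕ} (hx : ∀ j, k ≤ j → x j = 0) :
    ∑' j, y (j + k) ^ 2 ≤ ‖x - y‖ ^ 2 := by
  rw [norm_sq_eq_tsum]
  refine ((summable_nat_add_iff k).mpr (summable_sq y)).tsum_le_tsum_of_inj (· + k)
    (add_left_injective k) (fun _ _ => sq_nonneg _) (fun j => ?_) (summable_sq _)
  simp [hx (j + k) (Nat.le_add_left k j)]

theorem pow_mul_norm_sq_le_norm_sub_sq {q : ℝ} {z x : ℓ²} (hz : ∀ j, z j = q ^ (j + 1))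
    {k : ℕ} (hx : ∀ j, k ≤ j → x j = 0) : q ^ (2 * k) * ‖z‖ ^ 2 ≤ ‖x - z‖ ^ 2 :=
  calc q ^ (2 * k) * ‖z‖ ^ 2 = ∑' j, z (j + k) ^ 2 := by
        rw [norm_sq_eq_tsum, ← tsum_mul_left]
        exact tsum_congr fun j => by rw [hz, hz]; ring
    _ ≤ ‖x - z‖ ^ 2 := tsum_sq_shift_le_norm_sub_sq hx

end LpTwoNat

open LpTwoNat

/-- The matrix of `A` in the standard basis of `ℓ²` is tridiagonal with `2` on the diagonal and
`-1` beside it: `A` is `-Δ` on `ℕ` with the Dirichlet condition `x₋₁ = 0`. -/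
def IsDirichletLaplacian (A : ℓ² →L[ℝ] ℓ²) : Prop :=
  (∀ x, A x 0 = 2 * x 0 - x 1) ∧
    ∀ x, ∀ j : ℕ, 1 ≤ j → A x j = -x (j - 1) + 2 * x j - x (j + 1)

namespace IsDirichletLaplacian

variable {A : ℓ² →L[ℝ] ℓ²}

theorem inner_apply_eq (hA : IsDirichletLaplacian A) (x y : ℓ²) :
    ⟪x, A y⟫ = x 0 * y 0 + ∑' j, (x j - x (j + 1)) * (y j - y (j + 1)) := by
  set S : ℕ → ℕ → ℝ := fun m n => ∑' j, x (j + m) * y (j + n)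
  have hS := summable_shift_mul_shift x y
  have h00 : S 0 0 = x 0 * y 0 + S 1 1 := by simpa [S] using (hS 0 0).tsum_eq_zero_add
  have h01 : S 0 1 = x 0 * y 1 + S 1 2 := by simpa [S, add_assoc] using (hS 0 1).tsum_eq_zero_add
  have hlhs : ⟪x, A y⟫ = x 0 * (2 * y 0 - y 1) + (2 * S 1 1 - S 1 0 - S 1 2) := by
    rw [inner_eq_tsum, (summable_mul x (A y)).tsum_eq_zero_add, hA.1]
    congr 1
    refine HasSum.tsum_eq ?_
    convert (((hS 1 1).hasSum.mul_left 2).sub (hS 1 0).hasSum).sub (hS 1 2).hasSum using 1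
    funext j
    rw [hA.2 y (j + 1) (Nat.le_add_left 1 j)]
    simp only [Nat.add_sub_cancel, add_zero, add_assoc]
    ring
  have hrhs : ∑' j, (x j - x (j + 1)) * (y j - y (j + 1)) = S 0 0 - S 0 1 - S 1 0 + S 1 1 := by
    refine (tsum_congr fun j => ?_).trans
      ((((hS 0 0).hasSum.sub (hS 0 1).hasSum).sub (hS 1 0).hasSum).add (hS 1 1).hasSum).tsum_eq
    simp only [add_zero]
    ring
  rw [hlhs, hrhs, h00, h01]
  ring

theorem isSymmetric (hA : IsDirichletLaplacian A) : (A : ℓ² →ₗ[ℝ] ℓ²).IsSymmetric := by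
  intro x y
  rw [ContinuousLinearMap.coe_coe, real_inner_comm, hA.inner_apply_eq, hA.inner_apply_eq]
  simp only [mul_comm]

theorem inner_self_apply_nonneg (hA : IsDirichletLaplacian A) (x : ℓ²) : 0 ≤ ⟪x, A x⟫ := by
  rw [hA.inner_apply_eq]
  exact add_nonneg (mul_self_nonneg _) (tsum_nonneg fun _ => mul_self_nonneg _)

theorem smul_apply_add_smul_eq_smul_single (hA : IsDirichletLaplacian A) {c μ q : ℝ}
    (hq : c * (1 - q) ^ 2 = μ * q) {z : ℓ²} (hz : ∀ j, z j = q ^ (j + 1)) :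
    c • A z + μ • z = c • lp.single 2 0 1 := by
  ext j
  simp only [lp.coeFn_add, lp.coeFn_smul, Pi.add_apply, Pi.smul_apply, smul_eq_mul,
    lp.single_apply]
  rcases j with _ | j
  · simp only [hA.1, hz, Pi.single_eq_same]
    linear_combination -hq
  · simp only [hA.2 z (j + 1) (Nat.le_add_left 1 j), hz, Nat.add_sub_cancel,
      Pi.single_eq_of_ne j.succ_ne_zero]
    linear_combination (-q ^ (j + 1)) * hq

end IsDirichletLaplacian

theorem quadratic_sub_eq_of_critical {E : Type*} [NormedAddCommGroup E]
    [InnerProductSpace ℝ E] {T : E →ₗ[ℝ] E} (hT : T.IsSymmetric) (c μ : ℝ) {b z : E}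
    (hz : c • T z + μ • z = b) (x : E) :
    (c / 2 * ⟪x, T x⟫ - ⟪b, x⟫ + μ / 2 * ‖x‖ ^ 2)
        - (c / 2 * ⟪z, T z⟫ - ⟪b, z⟫ + μ / 2 * ‖z‖ ^ 2)
      = c / 2 * ⟪x - z, T (x - z)⟫ + μ / 2 * ‖x - z‖ ^ 2 := by
  subst hz
  have hzx := hT z x
  have hzz := hT z z
  simp only [← real_inner_self_eq_norm_sq, map_sub, inner_sub_left, inner_sub_right,
    inner_add_left, real_inner_smul_left, real_inner_comm x z] at hzx hzz ⊢
  linear_combination (-c / 2) * hzx + c * hzz + (c / 2) * real_inner_comm (T z) x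

/-- `q = (√κ - 1)/(√κ + 1)` is a root of the characteristic equation of the recurrence
`A x⋆ = e₀ - 4μ/(L - μ) x⋆`. -/
theorem div_four_mul_one_sub_sq {μ L : ℝ} (hμ : 0 < μ) (hL : 0 ≤ L) :
    (L - μ) / 4 * (1 - (√(L / μ) - 1) / (√(L / μ) + 1)) ^ 2
      = μ * ((√(L / μ) - 1) / (√(L / μ) + 1)) := by
  set s := √(L / μ) with hs
  have hs1 : s + 1 ≠ 0 := by positivity
  have hLs : L = μ * s ^ 2 := by
    rw [hs, Real.sq_sqrt (by positivity)]
    field_simp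
  rw [hLs]
  field_simp
  ring

/-- Nesterov's lower-bound estimate: for `g` the worst-case function on `ℓ²` with
parameters `0 < μ < L`, minimizer `x⋆` with coordinates `q, q², …`
(`q = (√κ−1)/(√κ+1)`, `κ = L/μ`), and any point `x^k` whose coordinates vanish beyond
index `k`, one has `‖x^k − x⋆‖² ≥ q^{2k}‖x⁰ − x⋆‖²` and
`g(x^k) − g(x⋆) ≥ (μ/2) q^{2k} ‖x⁰ − x⋆‖²`, where `x⁰ = 0`. -/
theorem stmt_11 (μ L : ℝ) (hμ : 0 < μ) (hL : μ < L)
    (A : lp (fun _ : ℕ => ℝ) 2 →L[ℝ] lp (fun _ : ℕ => ℝ) 2)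
    (hA0 : ∀ x, A x 0 = 2 * x 0 - x 1)
    (hA : ∀ x, ∀ j : ℕ, 1 ≤ j → A x j = -x (j - 1) + 2 * x j - x (j + 1))
    (g : lp (fun _ : ℕ => ℝ) 2 → ℝ)
    (hg : ∀ x, g x = (L - μ) / 8 * (⟪x, A x⟫ - 2 * x 0) + μ / 2 * ‖x‖ ^ 2)
    (q : ℝ) (hq : q = (Real.sqrt (L / μ) - 1) / (Real.sqrt (L / μ) + 1))
    (xs : lp (fun _ : ℕ => ℝ) 2) (hxs : ∀ j : ℕ, xs j = q ^ (j + 1))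
    (k : ℕ) (xk : lp (fun _ : ℕ => ℝ) 2) (hxk : ∀ j : ℕ, k ≤ j → xk j = 0) :
    ‖xk - xs‖ ^ 2 ≥ q ^ (2 * k) * ‖(0 : lp (fun _ : ℕ => ℝ) 2) - xs‖ ^ 2 ∧
    g xk - g xs ≥ μ / 2 * q ^ (2 * k) * ‖(0 : lp (fun _ : ℕ => ℝ) 2) - xs‖ ^ 2 := by
  have hLap : IsDirichletLaplacian A := ⟨hA0, hA⟩
  have hdist : q ^ (2 * k) * ‖(0 : ℓ²) - xs‖ ^ 2 ≤ ‖xk - xs‖ ^ 2 := by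
    rw [zero_sub, norm_neg]
    exact pow_mul_norm_sq_le_norm_sub_sq hxs hxk
  have hcrit : ((L - μ) / 4) • A xs + μ • xs = ((L - μ) / 4) • lp.single 2 0 1 :=
    hLap.smul_apply_add_smul_eq_smul_single (hq ▸ div_four_mul_one_sub_sq hμ (by linarith))
      hxs
  have hgap : g xk - g xs = (L - μ) / 8 * ⟪xk - xs, A (xk - xs)⟫ + μ / 2 * ‖xk - xs‖ ^ 2 := by
    have h := quadratic_sub_eq_of_critical hLap.isSymmetric ((L - μ) / 4) μ hcrit xk
    simp only [ContinuousLinearMap.coe_coe, real_inner_smul_left, lp.inner_single_left,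
      RCLike.inner_apply', conj_trivial, one_mul] at h
    rw [hg, hg]
    linear_combination h
  refine ⟨hdist, ?_⟩
  calc μ / 2 * q ^ (2 * k) * ‖(0 : ℓ²) - xs‖ ^ 2
      = μ / 2 * (q ^ (2 * k) * ‖(0 : ℓ²) - xs‖ ^ 2) := mul_assoc _ _ _
    _ ≤ μ / 2 * ‖xk - xs‖ ^ 2 := by gcongr
    _ ≤ g xk - g xs := by
      rw [hgap]
      exact le_add_of_nonneg_left (mul_nonneg (by linarith) (hLap.inner_self_apply_nonneg _))
end

section
/- Let g be μ-strongly convex and L-smooth with minimizer x⋆, and suppose g(x) − g(x⋆) ≥ (μ/2)·q^{2K} with q = (√κ−1)/(√κ+1), κ = L/μ > 1. If g(x) − g(x⋆) < ε and μ/(2ε) > 1, then K ≥ (1/4)(√κ − 1)·log(μ/(2ε)). -/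
open RealInnerProductSpace

/-- Let `g` be `μ`-strongly convex and `L`-smooth with minimizer `x⋆`, and suppose
`g(x) − g(x⋆) ≥ (μ/2) q^{2K}` where `q = (√κ−1)/(√κ+1)`, `κ = L/μ > 1`. If
`g(x) − g(x⋆) < ε` and `μ/(2ε) > 1`, then `K ≥ (1/4)(√κ − 1) log(μ/(2ε))`. -/
theorem stmt_14 {n : ℕ} (g : EuclideanSpace ℝ (Fin n) → ℝ)
    (D : EuclideanSpace ℝ (Fin n) → EuclideanSpace ℝ (Fin n)) (μ L ε : ℝ)
    (hμ : 0 < μ) (hL : μ < L) (hε : 0 < ε)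
    (hgrad : ∀ x, HasGradientAt g (D x) x)
    (hsc : ∀ a b, g b ≥ g a + ⟪D a, b - a⟫ + μ / 2 * ‖b - a‖ ^ 2)
    (hlip : ∀ a b, ‖D a - D b‖ ≤ L * ‖a - b‖)
    (xs x : EuclideanSpace ℝ (Fin n)) (hmin : IsMinOn g Set.univ xs)
    (K : ℝ) (hK : 0 ≤ K)
    (q : ℝ) (hq : q = (Real.sqrt (L / μ) - 1) / (Real.sqrt (L / μ) + 1))
    (hlow : g x - g xs ≥ μ / 2 * q ^ (2 * K))
    (hupp : g x - g xs < ε) (hratio : 1 < μ / (2 * ε)) :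
    K ≥ 1 / 4 * (Real.sqrt (L / μ) - 1) * Real.log (μ / (2 * ε)) := by
  set s := Real.sqrt (L / μ) with hs
  have hκ : 1 < L / μ := (one_lt_div hμ).2 hL
  have hs1 : 1 < s := by
    rw [hs, show (1:ℝ) = Real.sqrt 1 from Real.sqrt_one.symm]
    exact Real.sqrt_lt_sqrt (by norm_num) hκ
  have hq0 : 0 < q := by rw [hq]; exact div_pos (by linarith) (by linarith)
  have hq1 : q < 1 := by rw [hq, div_lt_one (by linarith)]; linarith
  have h1 : μ / 2 * q ^ (2 * K) < ε := lt_of_le_of_lt hlow hupp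
  have hqKpos : 0 < q ^ (2 * K) := Real.rpow_pos_of_pos hq0 _
  have h2 : q ^ (2 * K) < 2 * ε / μ := by
    rw [lt_div_iff₀ hμ]; nlinarith
  have h3 : Real.log (q ^ (2 * K)) < Real.log (2 * ε / μ) :=
    Real.log_lt_log hqKpos h2
  rw [Real.log_rpow hq0] at h3
  have heq : 2 * ε / μ = (μ / (2 * ε))⁻¹ := by
    field_simp
  rw [heq, Real.log_inv] at h3
  set R := Real.log (μ / (2 * ε)) with hR
  have hRpos : 0 < R := Real.log_pos hratio
  -- bound on -log q
  have hqi : q⁻¹ = (s + 1) / (s - 1) := by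
    rw [hq, inv_div]
  have ht : -Real.log q ≤ 2 / (s - 1) := by
    have := Real.log_le_sub_one_of_pos (x := (s + 1) / (s - 1))
      (div_pos (by linarith) (by linarith))
    rw [← hqi, Real.log_inv] at this
    rw [hqi] at this
    have h4 : (s + 1) / (s - 1) - 1 = 2 / (s - 1) := by
      rw [div_sub_one (ne_of_gt (by linarith : (0:ℝ) < s - 1))]; norm_num
    linarith [this, h4]
  have htpos : 0 < -Real.log q := by
    have := Real.log_neg hq0 hq1; linarith
  -- from h3 : 2 * K * log q < -R
  have h5 : R < 2 * K * (-Real.log q) := by linarith [h3]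
  have h6 : 2 * K * (-Real.log q) ≤ 2 * K * (2 / (s - 1)) :=
    mul_le_mul_of_nonneg_left ht (by linarith)
  have h7 : R < 2 * K * (2 / (s - 1)) := lt_of_lt_of_le h5 h6
  have hs1' : 0 < s - 1 := by linarith
  rw [ge_iff_le]
  have h8 : 2 * K * (2 / (s - 1)) = 4 * K / (s - 1) := by ring
  rw [h8, lt_div_iff₀ hs1'] at h7
  nlinarith [h7]
end

section
/- Suppose m ≥ 1, L₁,...,L_m > 0, μ > 0 with √μ ≤ (∑ⱼ√Lⱼ)/m. Set λ = √μ/(4∑ⱼ√Lⱼ), π_i = √L_i/(2∑ⱼ√Lⱼ) + 1/(2m), τ_i = λ/π_i, η = 1/(4√μ·∑ⱼ√Lⱼ). Then for every i: 0 ≤ τ_i ≤ 1/2 and ∑ⱼ τⱼLⱼ + L_iτ_i/(π_i(1 − τ_i)) ≤ 3√μ·∑ⱼ√Lⱼ ≤ 1/η − something nonnegative, i.e., 1/η − ∑ⱼ τⱼLⱼ ≥ L_iτ_i/(π_i(1 − τ_i)). -/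
/-!
Write `sᵢ = √Lᵢ` and `S = ∑ⱼ sⱼ`. The probability `πᵢ` dominates both its uniform part `1/(2m)` and
its importance part `sᵢ/(2S)`. The first bound gives `τᵢ ≤ 2mλ = m√μ/(2S) ≤ 1/2`, the second gives
`τᵢ sᵢ ≤ 2Sλ = √μ/2`. Hence `∑ⱼ τⱼLⱼ = ∑ⱼ (τⱼsⱼ) sⱼ ≤ √μ S/2` and
`Lᵢτᵢ/(πᵢ(1 − τᵢ)) ≤ 2 sᵢ (τᵢsᵢ)/πᵢ ≤ 2√μ S`, while `1/η = 4√μ S`.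
-/

open Finset

variable {ι : Type*} [Fintype ι]

/-- `πᵢ` of the statement, with `s = √L`. -/
noncomputable def mixedProb (s : ι → ℝ) (i : ι) : ℝ :=
  s i / (2 * ∑ j, s j) + 1 / (2 * Fintype.card ι)

/-- `τᵢ = λ/πᵢ` of the statement, with `r = √μ` and `s = √L`. -/
noncomputable def stepRatio (r : ℝ) (s : ι → ℝ) (i : ι) : ℝ :=
  r / (4 * ∑ j, s j) / mixedProb s i

section Weights

variable {s : ι → ℝ}

theorem sum_pos_of_pos (hs : ∀ j, 0 < s j) (i : ι) : 0 < ∑ j, s j :=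
  Finset.sum_pos (fun j _ => hs j) ⟨i, mem_univ i⟩

theorem mixedProb_pos (hs : ∀ j, 0 < s j) (i : ι) : 0 < mixedProb s i := by
  have := hs i
  have := sum_pos_of_pos hs i
  unfold mixedProb
  positivity

theorem one_le_two_mul_card_mul_mixedProb (hs : ∀ j, 0 < s j) (i : ι) :
    1 ≤ 2 * Fintype.card ι * mixedProb s i := by
  have hcard : (0 : ℝ) < Fintype.card ι := by
    exact_mod_cast Fintype.card_pos_iff.2 ⟨i⟩
  have hS := sum_pos_of_pos hs i
  have := hs i
  unfold mixedProb
  rw [mul_add, mul_one_div_cancel (by positivity)]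
  have : 0 ≤ 2 * Fintype.card ι * (s i / (2 * ∑ j, s j)) := by positivity
  linarith

theorem le_two_mul_sum_mul_mixedProb (hs : ∀ j, 0 < s j) (i : ι) :
    s i ≤ 2 * (∑ j, s j) * mixedProb s i := by
  have hS := sum_pos_of_pos hs i
  unfold mixedProb
  rw [mul_add, mul_div_cancel₀ _ (by positivity)]
  have : 0 ≤ 2 * (∑ j, s j) * (1 / (2 * Fintype.card ι)) := by positivity
  linarith

theorem stepRatio_nonneg (hs : ∀ j, 0 < s j) {r : ℝ} (hr : 0 ≤ r) (i : ι) :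
    0 ≤ stepRatio r s i := by
  have := sum_pos_of_pos hs i
  have := mixedProb_pos hs i
  unfold stepRatio
  positivity

theorem stepRatio_le_half (hs : ∀ j, 0 < s j) {r : ℝ} (hr : 0 ≤ r)
    (hcond : Fintype.card ι * r ≤ ∑ j, s j) (i : ι) : stepRatio r s i ≤ 1 / 2 := by
  have hS := sum_pos_of_pos hs i
  have hπ := mixedProb_pos hs i
  calc stepRatio r s i
      ≤ r / (4 * ∑ j, s j) * (2 * Fintype.card ι * mixedProb s i) / mixedProb s i := by
        unfold stepRatio
        gcongr
        exact le_mul_of_one_le_right (by positivity) (one_le_two_mul_card_mul_mixedProb hs i)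
    _ = Fintype.card ι * r / (2 * ∑ j, s j) := by field_simp; ring
    _ ≤ 1 / 2 := by rw [div_le_iff₀ (by positivity)]; linarith

theorem stepRatio_mul_le (hs : ∀ j, 0 < s j) {r : ℝ} (hr : 0 ≤ r) (i : ι) :
    stepRatio r s i * s i ≤ r / 2 := by
  have hS := sum_pos_of_pos hs i
  have hπ := mixedProb_pos hs i
  calc stepRatio r s i * s i
      ≤ r / (4 * ∑ j, s j) * (2 * (∑ j, s j) * mixedProb s i) / mixedProb s i := by
        unfold stepRatio
        rw [div_mul_eq_mul_div]
        gcongr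
        exact le_two_mul_sum_mul_mixedProb hs i
    _ = r / 2 := by field_simp; ring

end Weights

section Curvatures

variable {L : ι → ℝ} {r : ℝ}

theorem sum_stepRatio_mul_le (hL : ∀ j, 0 < L j) (hr : 0 ≤ r) :
    ∑ j, stepRatio r (fun j => √(L j)) j * L j ≤ r / 2 * ∑ j, √(L j) := by
  rw [mul_sum]
  refine sum_le_sum fun j _ => ?_
  calc stepRatio r (fun j => √(L j)) j * L j
      = (stepRatio r (fun j => √(L j)) j * √(L j)) * √(L j) := by
        rw [mul_assoc, Real.mul_self_sqrt (hL j).le]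
    _ ≤ r / 2 * √(L j) := by
        gcongr
        exact stepRatio_mul_le (fun j => Real.sqrt_pos.2 (hL j)) hr j

theorem mul_stepRatio_div_le (hL : ∀ j, 0 < L j) (hr : 0 ≤ r)
    (hcond : Fintype.card ι * r ≤ ∑ j, √(L j)) (i : ι) :
    L i * stepRatio r (fun j => √(L j)) i
        / (mixedProb (fun j => √(L j)) i * (1 - stepRatio r (fun j => √(L j)) i))
      ≤ 2 * r * ∑ j, √(L j) := by
  have hs : ∀ j, 0 < √(L j) := fun j => Real.sqrt_pos.2 (hL j)
  set π := mixedProb (fun j => √(L j)) i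
  set τ := stepRatio r (fun j => √(L j)) i
  have hπ : 0 < π := mixedProb_pos hs i
  have hτ : τ ≤ 1 / 2 := stepRatio_le_half hs hr hcond i
  have hnum : L i * τ ≤ r * (∑ j, √(L j)) * π :=
    calc L i * τ = √(L i) * (τ * √(L i)) := by
          rw [mul_comm τ, ← mul_assoc, Real.mul_self_sqrt (hL i).le]
      _ ≤ (2 * (∑ j, √(L j)) * π) * (r / 2) := by
          gcongr
          · exact mul_nonneg (stepRatio_nonneg hs hr i) (hs i).le
          · exact le_two_mul_sum_mul_mixedProb hs i
          · exact stepRatio_mul_le hs hr i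
      _ = r * (∑ j, √(L j)) * π := by ring
  calc L i * τ / (π * (1 - τ))
      ≤ r * (∑ j, √(L j)) * π / (π * (1 / 2)) := by
        gcongr
        linarith
    _ = 2 * r * ∑ j, √(L j) := by field_simp

end Curvatures

theorem stmt_16_general (m : ℕ) (L : Fin m → ℝ) (μ : ℝ)
    (hL : ∀ i, 0 < L i)
    (hcond : Real.sqrt μ ≤ (∑ j, Real.sqrt (L j)) / m)
    (lam η : ℝ) (π τ : Fin m → ℝ)
    (hlam : lam = Real.sqrt μ / (4 * ∑ j, Real.sqrt (L j)))
    (hπ : ∀ i, π i = Real.sqrt (L i) / (2 * ∑ j, Real.sqrt (L j)) + 1 / (2 * m))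
    (hτ : ∀ i, τ i = lam / π i)
    (hη : η = 1 / (4 * Real.sqrt μ * ∑ j, Real.sqrt (L j))) :
    ∀ i, 0 ≤ τ i ∧ τ i ≤ 1 / 2 ∧
      (∑ j, τ j * L j) + L i * τ i / (π i * (1 - τ i))
        ≤ 3 * Real.sqrt μ * ∑ j, Real.sqrt (L j) ∧
      3 * Real.sqrt μ * (∑ j, Real.sqrt (L j)) ≤ 1 / η ∧
      1 / η - (∑ j, τ j * L j) ≥ L i * τ i / (π i * (1 - τ i)) := by
  intro i
  have hs : ∀ j, 0 < √(L j) := fun j => Real.sqrt_pos.2 (hL j)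
  have hr : 0 ≤ √μ := Real.sqrt_nonneg μ
  have hπ' : π = mixedProb fun j => √(L j) := funext fun j => by simp [hπ, mixedProb]
  have hτ' : τ = stepRatio √μ fun j => √(L j) := funext fun j => by
    simp [hτ, hlam, hπ', stepRatio]
  have hm : (Fintype.card (Fin m) : ℝ) * √μ ≤ ∑ j, √(L j) := by
    have : (0 : ℝ) < m := by exact_mod_cast i.pos
    rw [Fintype.card_fin, mul_comm, ← le_div_iff₀ this]
    exact hcond
  have hsum := sum_stepRatio_mul_le hL hr
  have hterm := mul_stepRatio_div_le hL hr hm i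
  have hη' : 1 / η = 4 * √μ * ∑ j, √(L j) := by rw [hη, one_div_one_div]
  have hS := mul_nonneg hr (sum_pos_of_pos hs i).le
  subst hπ' hτ'
  refine ⟨stepRatio_nonneg hs hr i, stepRatio_le_half hs hr hm i, ?_, ?_, ?_⟩ <;>
    linarith

/-- Parameter choices for the generalized SSNM: with `√μ ≤ (∑ⱼ√Lⱼ)/m`,
`λ = √μ/(4∑ⱼ√Lⱼ)`, `πᵢ = √Lᵢ/(2∑ⱼ√Lⱼ) + 1/(2m)`, `τᵢ = λ/πᵢ`,
`η = 1/(4√μ·∑ⱼ√Lⱼ)`, we have for every `i`: `0 ≤ τᵢ ≤ 1/2`,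
`∑ⱼ τⱼLⱼ + Lᵢτᵢ/(πᵢ(1−τᵢ)) ≤ 3√μ·∑ⱼ√Lⱼ ≤ 1/η`, and hence
`1/η − ∑ⱼ τⱼLⱼ ≥ Lᵢτᵢ/(πᵢ(1−τᵢ))`. -/
theorem stmt_16 (m : ℕ) (hm : 1 ≤ m) (L : Fin m → ℝ) (μ : ℝ)
    (hL : ∀ i, 0 < L i) (hμ : 0 < μ)
    (hcond : Real.sqrt μ ≤ (∑ j, Real.sqrt (L j)) / m)
    (lam η : ℝ) (π τ : Fin m → ℝ)
    (hlam : lam = Real.sqrt μ / (4 * ∑ j, Real.sqrt (L j)))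
    (hπ : ∀ i, π i = Real.sqrt (L i) / (2 * ∑ j, Real.sqrt (L j)) + 1 / (2 * m))
    (hτ : ∀ i, τ i = lam / π i)
    (hη : η = 1 / (4 * Real.sqrt μ * ∑ j, Real.sqrt (L j))) :
    ∀ i, 0 ≤ τ i ∧ τ i ≤ 1 / 2 ∧
      (∑ j, τ j * L j) + L i * τ i / (π i * (1 - τ i))
        ≤ 3 * Real.sqrt μ * ∑ j, Real.sqrt (L j) ∧
      3 * Real.sqrt μ * (∑ j, Real.sqrt (L j)) ≤ 1 / η ∧
      1 / η - (∑ j, τ j * L j) ≥ L i * τ i / (π i * (1 - τ i)) :=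
  stmt_16_general m L μ hL hcond lam η π τ hlam hπ hτ hη
end

section
/- Let f: ℝᵐ → ℝ be convex and coordinatewise nondecreasing, and let g₁,...,g_m: ℝⁿ → ℝ with each gᵢ being μᵢ-strongly convex. If every partial subgradient of f is bounded below by bᵢ > 0 in coordinate i on the relevant domain, then the composition F(x) = f(g₁(x),...,g_m(x)) is (∑ᵢ bᵢμᵢ)-strongly convex. -/
/-!
Convexity of `f` bounds `l F(x) + (1-l) F(y)` below by `f` at the convex combination of the
vectors `g(x)` and `g(y)`. By strong convexity each coordinate of that combination exceeds
`gᵢ(z)`, `z = l x + (1-l) y`, by at least `wᵢ = μᵢ l(1-l)‖x-y‖²/2 ≥ 0`; raising the coordinates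
of `g(z)` one at a time by `wᵢ` raises `f` by at least `∑ᵢ bᵢ wᵢ`, and monotonicity of `f`
finishes the argument.
-/

open Finset Function

section CoordinateGrowth

variable {ι : Type*} [DecidableEq ι] {f : (ι → ℝ) → ℝ} {b w : ι → ℝ}

theorem add_sum_le_apply_add_piecewise
    (hflow : ∀ u : ι → ℝ, ∀ i, ∀ δ : ℝ, 0 ≤ δ → f (update u i (u i + δ)) ≥ f u + b i * δ)
    (hw : ∀ i, 0 ≤ w i) (s : Finset ι) (u : ι → ℝ) :
    f u + ∑ i ∈ s, b i * w i ≤ f (u + s.piecewise w 0) := by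
  induction s using Finset.induction with
  | empty => simp
  | @insert j s hj ih =>
    have hupdate : u + (insert j s).piecewise w 0 =
        update (u + s.piecewise w 0) j ((u + s.piecewise w 0) j + w j) := by
      ext i
      rcases eq_or_ne i j with rfl | hij
      · simp [hj]
      · simp [hij]
    rw [sum_insert hj, hupdate]
    linarith [hflow (u + s.piecewise w 0) j (w j) (hw j)]

theorem add_sum_le_apply_add [Fintype ι]
    (hflow : ∀ u : ι → ℝ, ∀ i, ∀ δ : ℝ, 0 ≤ δ → f (update u i (u i + δ)) ≥ f u + b i * δ)
    (hw : ∀ i, 0 ≤ w i) (u : ι → ℝ) :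
    f u + ∑ i, b i * w i ≤ f (u + w) := by
  simpa using add_sum_le_apply_add_piecewise hflow hw univ u

end CoordinateGrowth

theorem stmt_17_general {n m : ℕ} (f : (Fin m → ℝ) → ℝ) (g : Fin m → EuclideanSpace ℝ (Fin n) → ℝ)
    (μ b : Fin m → ℝ) (hμ : ∀ i, 0 < μ i)
    (hfconv : ConvexOn ℝ Set.univ f)
    (hfmono : ∀ u v : Fin m → ℝ, (∀ i, u i ≤ v i) → f u ≤ f v)
    (hflow : ∀ u : Fin m → ℝ, ∀ i, ∀ δ : ℝ, 0 ≤ δ →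
      f (Function.update u i (u i + δ)) ≥ f u + b i * δ)
    (hgsc : ∀ i, ∀ x y : EuclideanSpace ℝ (Fin n), ∀ l : ℝ, 0 ≤ l → l ≤ 1 →
      l * g i x + (1 - l) * g i y ≥
        g i (l • x + (1 - l) • y) + μ i / 2 * (l * (1 - l)) * ‖x - y‖ ^ 2) :
    ∀ x y : EuclideanSpace ℝ (Fin n), ∀ l : ℝ, 0 ≤ l → l ≤ 1 →
      l * f (fun i => g i x) + (1 - l) * f (fun i => g i y) ≥
        f (fun i => g i (l • x + (1 - l) • y)) +
          (∑ i, b i * μ i) / 2 * (l * (1 - l)) * ‖x - y‖ ^ 2 := by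
  intro x y l hl0 hl1
  set w : Fin m → ℝ := fun i => μ i / 2 * (l * (1 - l)) * ‖x - y‖ ^ 2
  have hw : ∀ i, 0 ≤ w i := fun i =>
    mul_nonneg (mul_nonneg (by linarith [hμ i]) (mul_nonneg hl0 (by linarith))) (sq_nonneg _)
  calc f (fun i => g i (l • x + (1 - l) • y)) + (∑ i, b i * μ i) / 2 * (l * (1 - l)) * ‖x - y‖ ^ 2
      = f (fun i => g i (l • x + (1 - l) • y)) + ∑ i, b i * w i := by
        simp only [w, sum_mul, sum_div]
        congr 1
        exact sum_congr rfl fun i _ => by ring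
    _ ≤ f ((fun i => g i (l • x + (1 - l) • y)) + w) := add_sum_le_apply_add hflow hw _
    _ ≤ f (l • (fun i => g i x) + (1 - l) • fun i => g i y) :=
        hfmono _ _ fun i => by simpa [w] using hgsc i x y l hl0 hl1
    _ ≤ l * f (fun i => g i x) + (1 - l) * f (fun i => g i y) :=
        hfconv.2 (Set.mem_univ _) (Set.mem_univ _) hl0 (by linarith) (by ring)

/-- If `f : ℝᵐ → ℝ` is convex and coordinatewise nondecreasing, each `gᵢ` is
`μᵢ`-strongly convex, and every partial (sub)gradient of `f` is bounded below by `bᵢ > 0`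
(i.e. `f(u + δeᵢ) ≥ f(u) + bᵢδ` for `δ ≥ 0`), then `F(x) = f(g₁(x),…,g_m(x))` is
`(∑ᵢ bᵢμᵢ)`-strongly convex. -/
theorem stmt_17 {n m : ℕ} (f : (Fin m → ℝ) → ℝ) (g : Fin m → EuclideanSpace ℝ (Fin n) → ℝ)
    (μ b : Fin m → ℝ) (hμ : ∀ i, 0 < μ i) (hb : ∀ i, 0 < b i)
    (hfconv : ConvexOn ℝ Set.univ f)
    (hfmono : ∀ u v : Fin m → ℝ, (∀ i, u i ≤ v i) → f u ≤ f v)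
    (hflow : ∀ u : Fin m → ℝ, ∀ i, ∀ δ : ℝ, 0 ≤ δ →
      f (Function.update u i (u i + δ)) ≥ f u + b i * δ)
    (hgsc : ∀ i, ∀ x y : EuclideanSpace ℝ (Fin n), ∀ l : ℝ, 0 ≤ l → l ≤ 1 →
      l * g i x + (1 - l) * g i y ≥
        g i (l • x + (1 - l) • y) + μ i / 2 * (l * (1 - l)) * ‖x - y‖ ^ 2) :
    ∀ x y : EuclideanSpace ℝ (Fin n), ∀ l : ℝ, 0 ≤ l → l ≤ 1 →
      l * f (fun i => g i x) + (1 - l) * f (fun i => g i y) ≥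
        f (fun i => g i (l • x + (1 - l) • y)) +
          (∑ i, b i * μ i) / 2 * (l * (1 - l)) * ‖x - y‖ ^ 2 :=
  stmt_17_general f g μ b hμ hfconv hfmono hflow hgsc
end
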